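/- arXiv:1910.13710 — 2 statements merged into one kernel-verified Lean document; each statement's English description precedes it below -/
import Mathlib

section
/- The RSK superinsertion algorithm gives a bijection between the set of all sequences $(z_{j_1}, \ldots, z_{j_n})$ of letters from an alphabet with $k$ even and $\ell$ odd letters, and the set of pairs $(S, T)$ where $S$ is a $(k,\ell)$-semistandard tableau and $T$ is a standard tableau of the same shape $\lambda \vdash n$ (necessarily a $(k,\ell)$-hook partition). -/
/-- `lam` is (the normalized row-length function of) a partition of `n`. -/
def IsPartitionOf (n : ℕ) (lam : ℕ → ℕ) : Prop :=
  (∀ i j, i ≤ j → lam j ≤ lam i) ∧ (∀ i, n ≤ i → lam i = 0) ∧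
  ∑ i ∈ Finset.range n, lam i = n

/-- `(k,ℓ)`-semistandard super tableau of shape `lam` (Berele–Regev),
normalized to be `0` off the shape. -/
def SuperSSYT (k ℓ : ℕ) (lam : ℕ → ℕ) (T : ℕ → ℕ → ℕ) : Prop :=
  (∀ a b, b < lam a → 1 ≤ T a b ∧ T a b ≤ k + ℓ) ∧
  (∀ a b, lam a ≤ b → T a b = 0) ∧
  (∀ a b, b + 1 < lam a → T a b ≤ T a (b + 1) ∧ (T a b = T a (b + 1) → T a b ≤ k)) ∧
  (∀ a b, b < lam (a + 1) → T a b ≤ T (a + 1) b ∧ (T a b = T (a + 1) b → k < T a b))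

/-- Standard tableau of shape `lam` with entries `1,…,n`, each appearing in
exactly one cell, strictly increasing along rows and columns; `0` off the
shape. -/
def IsStandardTab (n : ℕ) (lam : ℕ → ℕ) (T : ℕ → ℕ → ℕ) : Prop :=
  (∀ a b, b < lam a → 1 ≤ T a b ∧ T a b ≤ n) ∧
  (∀ a b, lam a ≤ b → T a b = 0) ∧
  (∀ v, 1 ≤ v → v ≤ n → ∃! p : ℕ × ℕ, p.2 < lam p.1 ∧ T p.1 p.2 = v) ∧
  (∀ a b, b + 1 < lam a → T a b < T a (b + 1)) ∧
  (∀ a b, b < lam (a + 1) → T a b < T (a + 1) b)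

/-!
Sequences are read one letter at a time. Superinserting `x` into `S` is row insertion for the
rule that `x` bumps the leftmost entry `y` of a row with `x < y`, or with `x = y` when `x` is odd;
the bumped letter is inserted into the next row, and the box finally created is labelled `n + 1`
in `T`. A bump is undone by an unbump (the rightmost entry of the row above that may sit above the
carried letter), and both keep `S` `(k,ℓ)`-semistandard because "`x` may sit above `y`" is exactly
the negation of "`y` may sit left of `x`". Since the cell of `T` labelled `n + 1` is a corner,
unbumping from it inverts one insertion step. So one step is a bijection from pairs of size `n`
together with a letter to pairs of size `n + 1`, and induction on `n` gives the theorem.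
-/

namespace SuperRSK

open Finset Function

variable {k ℓ : ℕ}

/-- `RowLE k x y`: `x` may stand immediately left of `y` in a row, and `ColLT k x y`: `x` may stand
immediately above `y` in a column, of a `(k,ℓ)`-semistandard tableau (even letters are `≤ k`). -/
def RowLE (k x y : ℕ) : Prop := x < y ∨ (x = y ∧ x ≤ k)

def ColLT (k x y : ℕ) : Prop := x < y ∨ (x = y ∧ k < x)

instance (k x y : ℕ) : Decidable (ColLT k x y) := inferInstanceAs (Decidable (_ ∨ _))

theorem colLT_iff_not_rowLE {x y : ℕ} : ColLT k x y ↔ ¬ RowLE k y x := by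
  unfold ColLT RowLE; omega

theorem RowLE.of_lt {x y : ℕ} (h : x < y) : RowLE k x y := Or.inl h

theorem ColLT.of_lt {x y : ℕ} (h : x < y) : ColLT k x y := Or.inl h

theorem RowLE.trans {x y z : ℕ} (h₁ : RowLE k x y) (h₂ : RowLE k y z) : RowLE k x z := by
  unfold RowLE at *; omega

theorem ColLT.trans {x y z : ℕ} (h₁ : ColLT k x y) (h₂ : ColLT k y z) : ColLT k x z := by
  unfold ColLT at *; omega

theorem RowLE.lt_of_colLT {x y z : ℕ} (h₁ : RowLE k x y) (h₂ : ColLT k y z) : x < z := by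
  unfold RowLE ColLT at *; omega

theorem ColLT.lt_of_rowLE {x y z : ℕ} (h₁ : ColLT k x y) (h₂ : RowLE k y z) : x < z := by
  unfold RowLE ColLT at *; omega

theorem superSSYT_iff {lam : ℕ → ℕ} {S : ℕ → ℕ → ℕ} :
    SuperSSYT k ℓ lam S ↔
      (∀ a b, b < lam a → 1 ≤ S a b ∧ S a b ≤ k + ℓ) ∧ (∀ a b, lam a ≤ b → S a b = 0) ∧
      (∀ a b, b + 1 < lam a → RowLE k (S a b) (S a (b + 1))) ∧
      (∀ a b, b < lam (a + 1) → ColLT k (S a b) (S (a + 1) b)) := by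
  unfold SuperSSYT RowLE ColLT
  refine and_congr Iff.rfl (and_congr Iff.rfl (and_congr ?_ ?_)) <;>
    exact forall₂_congr fun a b => imp_congr_right fun _ => by omega

theorem _root_.SuperSSYT.rowLE {lam : ℕ → ℕ} {S : ℕ → ℕ → ℕ} (hS : SuperSSYT k ℓ lam S) {a j j' : ℕ}
    (hjj' : j < j') (hj' : j' < lam a) : RowLE k (S a j) (S a j') := by
  induction j', hjj' using Nat.le_induction with
  | base => exact (superSSYT_iff.1 hS).2.2.1 a j hj'
  | succ j' _ ih => exact (ih (by omega)).trans ((superSSYT_iff.1 hS).2.2.1 a j' hj')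

theorem _root_.SuperSSYT.colLT {lam : ℕ → ℕ} {S : ℕ → ℕ → ℕ} (hS : SuperSSYT k ℓ lam S) {a b : ℕ}
    (hb : b < lam (a + 1)) : ColLT k (S a b) (S (a + 1) b) :=
  (superSSYT_iff.1 hS).2.2.2 a b hb

def setCell (S : ℕ → ℕ → ℕ) (r j v : ℕ) : ℕ → ℕ → ℕ :=
  fun a b => if a = r ∧ b = j then v else S a b

@[simp] theorem setCell_same (S : ℕ → ℕ → ℕ) (r j v : ℕ) : setCell S r j v r j = v := by
  simp [setCell]

theorem setCell_of_ne (S : ℕ → ℕ → ℕ) {r j v a b : ℕ} (h : a ≠ r ∨ b ≠ j) :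
    setCell S r j v a b = S a b := by
  simp only [setCell]; rw [if_neg (by tauto)]

@[simp] theorem setCell_setCell (S : ℕ → ℕ → ℕ) (r j v w : ℕ) :
    setCell (setCell S r j v) r j w = setCell S r j w := by
  funext a b; simp only [setCell]; split_ifs <;> rfl

theorem setCell_eq_self {S : ℕ → ℕ → ℕ} {r j v : ℕ} (h : S r j = v) : setCell S r j v = S := by
  funext a b; simp only [setCell]; split_ifs with h'
  · rw [h'.1, h'.2, h]
  · rfl

theorem eq_of_setCell_eq_setCell {S S' : ℕ → ℕ → ℕ} {r j v w : ℕ}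
    (h : setCell S r j v = setCell S' r j w) (hrj : S r j = S' r j) : S = S' := by
  funext a b
  by_cases hab : a = r ∧ b = j
  · rw [hab.1, hab.2, hrj]
  · simpa only [setCell_of_ne _ (not_and_or.1 hab)] using congrFun₂ h a b

theorem eq_of_update_eq_update {f g : ℕ → ℕ} {a v w : ℕ} (h : update f a v = update g a w)
    (ha : f a = g a) : f = g := by
  rw [← update_eq_self a f, ← update_idem v (f a) f, h, ha, update_idem, update_eq_self]

theorem lt_update_succ_iff {lam : ℕ → ℕ} {r a b : ℕ} :
    b < update lam r (lam r + 1) a ↔ b < lam a ∨ (a = r ∧ b = lam r) := by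
  rcases eq_or_ne a r with rfl | h
  · simp only [update_self, true_and]; omega
  · simp [h]

theorem lt_update_of_succ_eq_iff {lam : ℕ → ℕ} {r j a b : ℕ} (hj : j + 1 = lam r) :
    b < update lam r j a ↔ b < lam a ∧ ¬(a = r ∧ b = j) := by
  rcases eq_or_ne a r with rfl | h
  · simp only [update_self, true_and]; omega
  · simp [h]

theorem antitone_update_succ {lam : ℕ → ℕ} (hlam : Antitone lam) {r : ℕ}
    (hr : ∀ a, a + 1 = r → lam r < lam a) : Antitone (update lam r (lam r + 1)) := by
  refine antitone_nat_of_succ_le fun i => ?_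
  have hi : lam (i + 1) ≤ lam i := hlam (Nat.le_add_right i 1)
  simp only [update_apply]
  split_ifs with h₁ h₂ h₃
  · omega
  · exact hr i h₁
  · subst h₃; omega
  · exact hi

theorem antitone_update_of_succ_eq {lam : ℕ → ℕ} (hlam : Antitone lam) {r j : ℕ}
    (hj : j + 1 = lam r) (hbelow : lam (r + 1) ≤ j) : Antitone (update lam r j) := by
  refine antitone_nat_of_succ_le fun i => ?_
  have hi : lam (i + 1) ≤ lam i := hlam (Nat.le_add_right i 1)
  simp only [update_apply]
  split_ifs with h₁ h₂ h₃
  · omega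
  · subst h₁; omega
  · subst h₃; exact hbelow
  · exact hi

theorem sum_range_update_add (f : ℕ → ℕ) {r N : ℕ} (hr : r < N) (v : ℕ) :
    ∑ i ∈ range N, update f r v i + f r = ∑ i ∈ range N, f i + v := by
  have hmem : r ∈ range N := mem_range.2 hr
  rw [sum_update_of_mem hmem, sum_eq_add_sum_sdiff_singleton_of_mem hmem]
  ring

theorem _root_.IsPartitionOf.of_antitone {n : ℕ} {lam : ℕ → ℕ} (hanti : Antitone lam)
    (hsum : ∑ i ∈ range (n + 1), lam i = n) : IsPartitionOf n lam := by
  have hlast : lam n = 0 := by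
    have := card_nsmul_le_sum (range (n + 1)) lam (lam n)
      fun i hi => hanti (Nat.lt_succ_iff.1 (mem_range.1 hi))
    rw [card_range, smul_eq_mul, hsum] at this
    nlinarith
  refine ⟨fun i j hij => hanti hij, fun i hi => Nat.eq_zero_of_le_zero (hlast ▸ hanti hi), ?_⟩
  rwa [sum_range_succ, hlast, add_zero] at hsum

theorem _root_.IsPartitionOf.lt_of_pos {n : ℕ} {lam : ℕ → ℕ} (h : IsPartitionOf n lam) {r : ℕ}
    (hr : 0 < lam r) : r < n := by
  by_contra hn
  exact hr.ne' (h.2.1 r (not_lt.1 hn))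

theorem _root_.IsPartitionOf.sum_range_succ_eq {n : ℕ} {lam : ℕ → ℕ} (h : IsPartitionOf n lam) :
    ∑ i ∈ range (n + 1), lam i = n := by
  rw [sum_range_succ, h.2.1 n le_rfl, h.2.2, add_zero]

theorem _root_.IsPartitionOf.update_succ {n : ℕ} {lam : ℕ → ℕ} (h : IsPartitionOf n lam) {r : ℕ}
    (hr : ∀ a, a + 1 = r → lam r < lam a) :
    IsPartitionOf (n + 1) (update lam r (lam r + 1)) := by
  have hrn : r < n + 1 + 1 := by
    rcases r with _ | a
    · omega
    · have := h.lt_of_pos (Nat.zero_lt_of_lt (hr a rfl)); omega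
  refine .of_antitone (antitone_update_succ h.1 hr) ?_
  have := sum_range_update_add lam hrn (lam r + 1)
  rw [sum_range_succ lam, h.sum_range_succ_eq, h.2.1 (n + 1) n.le_succ] at this
  omega

theorem _root_.IsPartitionOf.update_of_succ_eq {n : ℕ} {lam : ℕ → ℕ} (h : IsPartitionOf (n + 1) lam)
    {r j : ℕ} (hj : j + 1 = lam r) (hbelow : lam (r + 1) ≤ j) :
    IsPartitionOf n (update lam r j) := by
  refine .of_antitone (antitone_update_of_succ_eq h.1 hj hbelow) ?_
  have := sum_range_update_add lam (h.lt_of_pos (by omega : 0 < lam r)) j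
  rw [h.2.2] at this
  omega

section Cells

variable {lam : ℕ → ℕ} {S T : ℕ → ℕ → ℕ}

theorem _root_.SuperSSYT.setCell (hS : SuperSSYT k ℓ lam S) {r j v : ℕ} (hj : j < lam r)
    (hv : 1 ≤ v ∧ v ≤ k + ℓ) (hleft : ∀ b, b + 1 = j → RowLE k (S r b) v)
    (hright : j + 1 < lam r → RowLE k v (S r (j + 1)))
    (habove : ∀ a, a + 1 = r → ColLT k (S a j) v)
    (hbelow : j < lam (r + 1) → ColLT k v (S (r + 1) j)) :
    SuperSSYT k ℓ lam (setCell S r j v) := by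
  obtain ⟨hrange, hzero, hrow, hcol⟩ := superSSYT_iff.1 hS
  refine superSSYT_iff.2 ⟨fun a b hb => ?_, fun a b hb => ?_, fun a b hb => ?_, fun a b hb => ?_⟩
    <;> simp only [SuperRSK.setCell]
  · split_ifs with h
    · exact hv
    · exact hrange a b hb
  · split_ifs with h
    · obtain ⟨rfl, rfl⟩ := h; omega
    · exact hzero a b hb
  · split_ifs with h₁ h₂ h₂
    · omega
    · obtain ⟨rfl, rfl⟩ := h₁; exact hright hb
    · obtain ⟨rfl, rfl⟩ := h₂; exact hleft b rfl
    · exact hrow a b hb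
  · split_ifs with h₁ h₂ h₂
    · omega
    · obtain ⟨rfl, rfl⟩ := h₁; exact hbelow hb
    · obtain ⟨rfl, rfl⟩ := h₂; exact habove a rfl
    · exact hcol a b hb

theorem _root_.SuperSSYT.addCell (hS : SuperSSYT k ℓ lam S) (hanti : Antitone lam) {r v : ℕ}
    (hr : ∀ a, a + 1 = r → lam r < lam a) (hv : 1 ≤ v ∧ v ≤ k + ℓ)
    (hleft : ∀ b, b + 1 = lam r → RowLE k (S r b) v)
    (habove : ∀ a, a + 1 = r → ColLT k (S a (lam r)) v) :
    SuperSSYT k ℓ (update lam r (lam r + 1)) (setCell S r (lam r) v) := by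
  obtain ⟨hrange, hzero, hrow, hcol⟩ := superSSYT_iff.1 hS
  refine superSSYT_iff.2 ⟨fun a b hb => ?_, fun a b hb => ?_, fun a b hb => ?_, fun a b hb => ?_⟩
  · rw [lt_update_succ_iff] at hb
    simp only [setCell]
    split_ifs with h
    · exact hv
    · exact hrange a b (by tauto)
  · rw [← not_lt, lt_update_succ_iff, not_or, not_lt] at hb
    rw [setCell_of_ne _ (not_and_or.1 hb.2)]
    exact hzero a b hb.1
  · rw [lt_update_succ_iff] at hb
    simp only [setCell]
    split_ifs with h₁ h₂ h₂
    · omega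
    · obtain ⟨rfl, rfl⟩ := h₁; omega
    · obtain ⟨rfl, h₂⟩ := h₂; exact hleft b (by omega)
    · exact hrow a b (by omega)
  · rw [lt_update_succ_iff] at hb
    have hbelow := hanti (Nat.le_add_right r 1)
    simp only [setCell]
    split_ifs with h₁ h₂ h₂
    · omega
    · obtain ⟨rfl, rfl⟩ := h₁; omega
    · obtain ⟨rfl, rfl⟩ := h₂; exact habove a rfl
    · exact hcol a b (by tauto)

theorem _root_.SuperSSYT.removeCorner (hS : SuperSSYT k ℓ lam S) {r j : ℕ}
    (hj : j + 1 = lam r) (hbelow : lam (r + 1) ≤ j) :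
    SuperSSYT k ℓ (update lam r j) (setCell S r j 0) := by
  obtain ⟨hrange, hzero, hrow, hcol⟩ := superSSYT_iff.1 hS
  refine superSSYT_iff.2 ⟨fun a b hb => ?_, fun a b hb => ?_, fun a b hb => ?_, fun a b hb => ?_⟩
  · rw [lt_update_of_succ_eq_iff hj] at hb
    rw [setCell_of_ne _ (not_and_or.1 hb.2)]
    exact hrange a b hb.1
  · rw [← not_lt, lt_update_of_succ_eq_iff hj, not_and_not_right] at hb
    simp only [setCell]
    split_ifs with h
    · rfl
    · exact hzero a b (not_lt.1 fun h' => h (hb h'))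
  · rw [lt_update_of_succ_eq_iff hj] at hb
    simp only [setCell]
    split_ifs with h₁ h₂ h₂
    · omega
    · obtain ⟨rfl, rfl⟩ := h₁; omega
    · exact absurd h₂ hb.2
    · exact hrow a b hb.1
  · rw [lt_update_of_succ_eq_iff hj] at hb
    simp only [setCell]
    split_ifs with h₁ h₂ h₂
    · omega
    · obtain ⟨rfl, rfl⟩ := h₁; omega
    · exact absurd h₂ hb.2
    · exact hcol a b hb.1

theorem _root_.IsStandardTab.cell_eq {n : ℕ} (hT : IsStandardTab n lam T) {p q : ℕ × ℕ}
    (hp : p.2 < lam p.1) (hq : q.2 < lam q.1) (h : T p.1 p.2 = T q.1 q.2) : p = q := by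
  obtain ⟨c, -, hc⟩ := hT.2.2.1 (T p.1 p.2) (hT.1 _ _ hp).1 (hT.1 _ _ hp).2
  exact (hc p ⟨hp, rfl⟩).trans (hc q ⟨hq, h.symm⟩).symm

theorem existsUnique_cell_addCell {n : ℕ} (hrange : ∀ a b, b < lam a → 1 ≤ T a b ∧ T a b ≤ n)
    (huniq : ∀ v, 1 ≤ v → v ≤ n → ∃! p : ℕ × ℕ, p.2 < lam p.1 ∧ T p.1 p.2 = v) {r v : ℕ}
    (hv₁ : 1 ≤ v) (hv₂ : v ≤ n + 1) :
    ∃! p : ℕ × ℕ, p.2 < update lam r (lam r + 1) p.1 ∧ setCell T r (lam r) (n + 1) p.1 p.2 = v := by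
  rcases Nat.le_succ_iff.1 hv₂ with hvn | rfl
  · obtain ⟨⟨a, b⟩, ⟨hab, habv⟩, hq⟩ := huniq v hv₁ hvn
    have hne : a ≠ r ∨ b ≠ lam r := by
      rw [← not_and_or]; rintro ⟨rfl, rfl⟩; exact lt_irrefl _ hab
    refine ⟨(a, b), ⟨lt_update_succ_iff.2 (Or.inl hab), by rwa [setCell_of_ne _ hne]⟩, ?_⟩
    rintro ⟨a', b'⟩ ⟨hab', hv'⟩
    rw [lt_update_succ_iff] at hab'
    simp only [setCell] at hv'
    split_ifs at hv' with h
    · omega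
    · exact hq (a', b') ⟨by tauto, hv'⟩
  · refine ⟨(r, lam r), ⟨lt_update_succ_iff.2 (Or.inr ⟨rfl, rfl⟩), setCell_same ..⟩, ?_⟩
    rintro ⟨a, b⟩ ⟨hab, hv⟩
    rw [lt_update_succ_iff] at hab
    simp only [setCell] at hv
    split_ifs at hv with h
    · rw [h.1, h.2]
    · have := hrange a b (by tauto); omega

theorem _root_.IsStandardTab.addCell {n : ℕ} (hT : IsStandardTab n lam T) (hanti : Antitone lam)
    {r : ℕ} (hr : ∀ a, a + 1 = r → lam r < lam a) :
    IsStandardTab (n + 1) (update lam r (lam r + 1)) (setCell T r (lam r) (n + 1)) := by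
  obtain ⟨hrange, hzero, huniq, hrow, hcol⟩ := hT
  refine ⟨fun a b hb => ?_, fun a b hb => ?_, fun v hv₁ hv₂ => ?_, fun a b hb => ?_,
    fun a b hb => ?_⟩
  · rw [lt_update_succ_iff] at hb
    simp only [setCell]
    split_ifs with h
    · omega
    · have := hrange a b (by tauto); omega
  · rw [← not_lt, lt_update_succ_iff, not_or, not_lt] at hb
    rw [setCell_of_ne _ (not_and_or.1 hb.2)]
    exact hzero a b hb.1
  · exact existsUnique_cell_addCell hrange huniq hv₁ hv₂
  · rw [lt_update_succ_iff] at hb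
    simp only [setCell]
    split_ifs with h₁ h₂ h₂
    · omega
    · obtain ⟨rfl, rfl⟩ := h₁; omega
    · obtain ⟨rfl, h₂⟩ := h₂; have := hrange a b (by omega); omega
    · exact hrow a b (by omega)
  · rw [lt_update_succ_iff] at hb
    have hbelow := hanti (Nat.le_add_right r 1)
    simp only [setCell]
    split_ifs with h₁ h₂ h₂
    · omega
    · obtain ⟨rfl, rfl⟩ := h₁; omega
    · obtain ⟨rfl, rfl⟩ := h₂; have := hrange a (lam (a + 1)) (hr a rfl); omega
    · exact hcol a b (by tauto)

theorem existsUnique_cell_removeCorner {n : ℕ}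
    (huniq : ∀ v, 1 ≤ v → v ≤ n + 1 → ∃! p : ℕ × ℕ, p.2 < lam p.1 ∧ T p.1 p.2 = v) {r j v : ℕ}
    (hj : j + 1 = lam r) (hval : T r j = n + 1) (hv₁ : 1 ≤ v) (hv₂ : v ≤ n) :
    ∃! p : ℕ × ℕ, p.2 < update lam r j p.1 ∧ setCell T r j 0 p.1 p.2 = v := by
  obtain ⟨⟨a, b⟩, ⟨hab, habv⟩, hq⟩ := huniq v hv₁ (by omega)
  dsimp only at hab habv
  have hne : ¬(a = r ∧ b = j) := by rintro ⟨rfl, rfl⟩; omega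
  refine ⟨(a, b), ⟨(lt_update_of_succ_eq_iff hj).2 ⟨hab, hne⟩, ?_⟩, ?_⟩
  · rwa [setCell_of_ne _ (not_and_or.1 hne)]
  rintro ⟨a', b'⟩ ⟨hab', hv'⟩
  rw [lt_update_of_succ_eq_iff hj] at hab'
  rw [setCell_of_ne _ (not_and_or.1 hab'.2)] at hv'
  exact hq (a', b') ⟨hab'.1, hv'⟩

theorem _root_.IsStandardTab.corner_of_eq_succ {n : ℕ} (hT : IsStandardTab (n + 1) lam T)
    {r c : ℕ} (hrc : c < lam r) (hval : T r c = n + 1) :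
    c + 1 = lam r ∧ lam (r + 1) ≤ c := by
  -- an entry right of or below `(r, c)` would exceed `n + 1`
  constructor
  · by_contra h
    have := hT.2.2.2.1 r c (by omega)
    have := (hT.1 r (c + 1) (by omega)).2
    omega
  · by_contra h
    have := hT.2.2.2.2 r c (by omega)
    have := (hT.1 (r + 1) c (by omega)).2
    omega

theorem _root_.IsStandardTab.removeCorner {n : ℕ} (hT : IsStandardTab (n + 1) lam T) {r j : ℕ}
    (hj : j + 1 = lam r) (hbelow : lam (r + 1) ≤ j) (hval : T r j = n + 1) :
    IsStandardTab n (update lam r j) (setCell T r j 0) := by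
  have hmax : ∀ a b, b < lam a → T a b = n + 1 → a = r ∧ b = j := fun a b hb hv =>
    Prod.ext_iff.1 (hT.cell_eq (p := (a, b)) (q := (r, j)) hb (by simp; omega) (hv.trans hval.symm))
  obtain ⟨hrange, hzero, huniq, hrow, hcol⟩ := hT
  refine ⟨fun a b hb => ?_, fun a b hb => ?_, fun v hv₁ hv₂ => ?_, fun a b hb => ?_,
    fun a b hb => ?_⟩
  · rw [lt_update_of_succ_eq_iff hj] at hb
    rw [setCell_of_ne _ (not_and_or.1 hb.2)]
    have := hrange a b hb.1
    have := mt (hmax a b hb.1) hb.2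
    omega
  · rw [← not_lt, lt_update_of_succ_eq_iff hj, not_and_not_right] at hb
    simp only [setCell]
    split_ifs with h
    · rfl
    · exact hzero a b (not_lt.1 fun h' => h (hb h'))
  · exact existsUnique_cell_removeCorner huniq hj hval hv₁ hv₂
  · rw [lt_update_of_succ_eq_iff hj] at hb
    simp only [setCell]
    split_ifs with h₁ h₂ h₂
    · omega
    · obtain ⟨rfl, rfl⟩ := h₁; omega
    · exact absurd h₂ hb.2
    · exact hrow a b hb.1
  · rw [lt_update_of_succ_eq_iff hj] at hb
    simp only [setCell]
    split_ifs with h₁ h₂ h₂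
    · omega
    · obtain ⟨rfl, rfl⟩ := h₁; omega
    · exact absurd h₂ hb.2
    · exact hcol a b hb.1

end Cells

section Bumping

variable {lam : ℕ → ℕ} {S : ℕ → ℕ → ℕ}

def bumpPos (k : ℕ) (lam : ℕ → ℕ) (S : ℕ → ℕ → ℕ) (x r : ℕ) : ℕ :=
  Nat.find (p := fun j => lam r ≤ j ∨ ColLT k x (S r j)) ⟨lam r, Or.inl le_rfl⟩

theorem bumpPos_le (x r : ℕ) : bumpPos k lam S x r ≤ lam r :=
  Nat.find_min' _ (Or.inl le_rfl)

theorem bumpPos_le_of_colLT {x r j : ℕ} (h : ColLT k x (S r j)) : bumpPos k lam S x r ≤ j :=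
  Nat.find_min' _ (Or.inr h)

theorem colLT_bumpPos {x r : ℕ} (h : bumpPos k lam S x r < lam r) :
    ColLT k x (S r (bumpPos k lam S x r)) :=
  (Nat.find_spec (p := fun j => lam r ≤ j ∨ ColLT k x (S r j)) _).resolve_left (not_le.2 h)

theorem rowLE_of_lt_bumpPos {x r j : ℕ} (h : j < bumpPos k lam S x r) :
    j < lam r ∧ RowLE k (S r j) x := by
  have := not_or.1 (Nat.find_min (p := fun j => lam r ≤ j ∨ ColLT k x (S r j)) _ h)
  exact ⟨not_le.1 this.1, colLT_iff_not_rowLE.not_left.1 this.2⟩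

theorem bumpPos_eq {x r j : ℕ} (hj : j ≤ lam r) (hbump : j = lam r ∨ ColLT k x (S r j))
    (hleft : ∀ i < j, RowLE k (S r i) x) : bumpPos k lam S x r = j := by
  refine (Nat.find_eq_iff _).2 ⟨hbump.imp_left Eq.ge, fun i hi => ?_⟩
  rw [not_or, colLT_iff_not_rowLE, not_not]
  exact ⟨by omega, hleft i hi⟩

def unbumpPos (k : ℕ) (lam : ℕ → ℕ) (S : ℕ → ℕ → ℕ) (y r : ℕ) : ℕ :=
  Nat.findGreatest (fun j => ColLT k (S r j) y) (lam r - 1)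

theorem unbumpPos_spec {y r jp : ℕ} (hjp : jp < lam r) (h : ColLT k (S r jp) y) :
    jp ≤ unbumpPos k lam S y r ∧ unbumpPos k lam S y r < lam r ∧
      ColLT k (S r (unbumpPos k lam S y r)) y ∧
      ∀ j, unbumpPos k lam S y r < j → j < lam r → RowLE k y (S r j) := by
  have hle : jp ≤ lam r - 1 := by omega
  refine ⟨Nat.le_findGreatest (P := fun j => ColLT k (S r j) y) hle h, ?_,
    Nat.findGreatest_spec (P := fun j => ColLT k (S r j) y) hle h, fun j hj hjr => ?_⟩
  · have := Nat.findGreatest_le (P := fun j => ColLT k (S r j) y) (lam r - 1)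
    unfold unbumpPos; omega
  · exact colLT_iff_not_rowLE.not_left.1
      (Nat.findGreatest_is_greatest (P := fun j => ColLT k (S r j) y) hj (by omega))

theorem unbumpPos_eq {y r j : ℕ} (hj : j < lam r) (hbump : ColLT k (S r j) y)
    (hright : ∀ i, j < i → i < lam r → RowLE k y (S r i)) : unbumpPos k lam S y r = j := by
  refine (Nat.findGreatest_eq_iff).2 ⟨by omega, fun _ => hbump, fun i hi hir => ?_⟩
  exact colLT_iff_not_rowLE.not_left.2 (hright i hi (by omega))

/-- Inserts `x` into row `r` and carries bumped letters down; returns the new tableau and the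
row of the new box. The fuel bounds the number of rows visited. -/
def insertFrom (k : ℕ) (lam : ℕ → ℕ) : ℕ → (ℕ → ℕ → ℕ) → ℕ → ℕ → (ℕ → ℕ → ℕ) × ℕ
  | 0, S, x, r => (setCell S r (bumpPos k lam S x r) x, r)
  | fuel + 1, S, x, r =>
    if bumpPos k lam S x r < lam r then
      insertFrom k lam fuel (setCell S r (bumpPos k lam S x r) x) (S r (bumpPos k lam S x r))
        (r + 1)
    else (setCell S r (bumpPos k lam S x r) x, r)

/-- Carries `y`, just removed from row `r`, up through rows `r - 1, …, 0` by reverse bumping;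
returns the new tableau and the letter ejected from row `0`. -/
def reverseFrom (k : ℕ) (lam : ℕ → ℕ) : ℕ → (ℕ → ℕ → ℕ) → ℕ → (ℕ → ℕ → ℕ) × ℕ
  | 0, S, y => (S, y)
  | r + 1, S, y =>
    reverseFrom k lam r (setCell S r (unbumpPos k lam S y r) y) (S r (unbumpPos k lam S y r))

/-- `x`, bumped out of row `r - 1`, may sit below the entries of that row up to some column `jp`,
and lands in row `r` no further right than `jp`. -/
def InsertInv (k : ℕ) (lam : ℕ → ℕ) (S : ℕ → ℕ → ℕ) (x r : ℕ) : Prop :=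
  ∀ a, a + 1 = r → ∃ jp < lam a, (∀ j ≤ jp, ColLT k (S a j) x) ∧
    (lam r ≤ jp ∨ ColLT k x (S r jp))

/-- `y`, carried up out of row `r`, may sit above the entries of that row from some column `jp` on,
and the entry of row `r - 1` in column `jp` may sit above `y`. -/
def ReverseInv (k : ℕ) (lam : ℕ → ℕ) (S : ℕ → ℕ → ℕ) (y r : ℕ) : Prop :=
  ∀ a, a + 1 = r → ∃ jp < lam a, ColLT k (S a jp) y ∧
    ∀ j, jp ≤ j → j < lam r → ColLT k y (S r j)

section Bump

variable {x r : ℕ}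

theorem _root_.SuperSSYT.bump (hS : SuperSSYT k ℓ lam S) (hx : 1 ≤ x ∧ x ≤ k + ℓ)
    (hinv : InsertInv k lam S x r) (hb : bumpPos k lam S x r < lam r) :
    SuperSSYT k ℓ lam (setCell S r (bumpPos k lam S x r) x) := by
  have hbump := colLT_bumpPos hb
  refine hS.setCell hb hx (fun b hb' => (rowLE_of_lt_bumpPos (lam := lam) (by omega)).2)
    (fun h => RowLE.of_lt (hbump.lt_of_rowLE (hS.rowLE (Nat.lt_succ_self _) h))) ?_
    (fun h => hbump.trans (hS.colLT h))
  rintro a rfl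
  obtain ⟨jp, -, habove, hland⟩ := hinv a rfl
  exact habove _ (hland.elim (bumpPos_le x (a + 1)).trans bumpPos_le_of_colLT)

theorem insertInv_bump (hS : SuperSSYT k ℓ lam S) (hb : bumpPos k lam S x r < lam r) :
    InsertInv k lam (setCell S r (bumpPos k lam S x r) x) (S r (bumpPos k lam S x r)) (r + 1) := by
  rintro a ha
  obtain rfl : a = r := by omega
  refine ⟨_, hb, fun j hj => ?_, ?_⟩
  · rcases hj.lt_or_eq with hj | rfl
    · rw [setCell_of_ne _ (Or.inr hj.ne)]
      exact ColLT.of_lt ((rowLE_of_lt_bumpPos hj).2.lt_of_colLT (colLT_bumpPos hb))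
    · rw [setCell_same]; exact colLT_bumpPos hb
  · rw [setCell_of_ne _ (Or.inl (by omega))]
    by_cases h : bumpPos k lam S x a < lam (a + 1)
    · exact Or.inr (hS.colLT h)
    · exact Or.inl (not_lt.1 h)

theorem unbumpPos_bump (hS : SuperSSYT k ℓ lam S) (hb : bumpPos k lam S x r < lam r) :
    unbumpPos k lam (setCell S r (bumpPos k lam S x r) x) (S r (bumpPos k lam S x r)) r =
      bumpPos k lam S x r :=
  unbumpPos_eq hb (by rw [setCell_same]; exact colLT_bumpPos hb) fun i hi hir => by
    rw [setCell_of_ne _ (Or.inr hi.ne')]; exact hS.rowLE hi hir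

theorem _root_.SuperSSYT.append (hS : SuperSSYT k ℓ lam S) (hanti : Antitone lam)
    (hx : 1 ≤ x ∧ x ≤ k + ℓ) (hinv : InsertInv k lam S x r) (h : bumpPos k lam S x r = lam r) :
    (∀ a, a + 1 = r → lam r < lam a) ∧
      SuperSSYT k ℓ (update lam r (lam r + 1)) (setCell S r (lam r) x) := by
  have hfits : ∀ a, a + 1 = r → lam r < lam a ∧ ColLT k (S a (lam r)) x := by
    rintro a rfl
    obtain ⟨jp, hjp, habove, hland⟩ := hinv a rfl
    have : lam (a + 1) ≤ jp := hland.elim id fun hc => h ▸ bumpPos_le_of_colLT hc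
    exact ⟨by omega, habove _ this⟩
  exact ⟨fun a ha => (hfits a ha).1, hS.addCell hanti (fun a ha => (hfits a ha).1) hx
    (fun b hb => (rowLE_of_lt_bumpPos (lam := lam) (by omega)).2) (fun a ha => (hfits a ha).2)⟩

end Bump

section Unbump

variable {y r : ℕ}

theorem unbumpPos_lt (hinv : ReverseInv k lam S y (r + 1)) : unbumpPos k lam S y r < lam r := by
  obtain ⟨jp, hjp, hCjp, -⟩ := hinv r rfl
  exact (unbumpPos_spec hjp hCjp).2.1

theorem _root_.SuperSSYT.unbump (hS : SuperSSYT k ℓ lam S) (hy : 1 ≤ y ∧ y ≤ k + ℓ)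
    (hinv : ReverseInv k lam S y (r + 1)) :
    SuperSSYT k ℓ lam (setCell S r (unbumpPos k lam S y r) y) := by
  obtain ⟨jp, hjp, hCjp, hbelow⟩ := hinv r rfl
  obtain ⟨hge, hlt, hbump, hright⟩ := unbumpPos_spec hjp hCjp
  refine hS.setCell hlt hy (fun b hb => ?_) (fun h => hright _ (by omega) h) ?_
    (fun h => hbelow _ hge h)
  · exact RowLE.of_lt ((hS.rowLE (j' := unbumpPos k lam S y r) (by omega) hlt).lt_of_colLT hbump)
  · rintro a rfl
    exact (hS.colLT hlt).trans hbump

theorem reverseInv_unbump (hanti : Antitone lam) (hS : SuperSSYT k ℓ lam S)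
    (hinv : ReverseInv k lam S y (r + 1)) :
    ReverseInv k lam (setCell S r (unbumpPos k lam S y r) y) (S r (unbumpPos k lam S y r)) r := by
  obtain ⟨jp, hjp, hCjp, -⟩ := hinv r rfl
  obtain ⟨-, hlt, hbump, hright⟩ := unbumpPos_spec hjp hCjp
  rintro a rfl
  refine ⟨_, hlt.trans_le (hanti (Nat.le_add_right a 1)), ?_, fun j hj hja => ?_⟩
  · rw [setCell_of_ne _ (Or.inl (by omega))]
    exact hS.colLT hlt
  · rcases hj.lt_or_eq with hj | rfl
    · rw [setCell_of_ne _ (Or.inr hj.ne')]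
      exact ColLT.of_lt (hbump.lt_of_rowLE (hright j hj hja))
    · rw [setCell_same]; exact hbump

theorem bumpPos_unbump (hS : SuperSSYT k ℓ lam S) (hinv : ReverseInv k lam S y (r + 1)) :
    bumpPos k lam (setCell S r (unbumpPos k lam S y r) y) (S r (unbumpPos k lam S y r)) r =
      unbumpPos k lam S y r := by
  obtain ⟨jp, hjp, hCjp, -⟩ := hinv r rfl
  obtain ⟨-, hlt, hbump, -⟩ := unbumpPos_spec hjp hCjp
  refine bumpPos_eq hlt.le (Or.inr (by rw [setCell_same]; exact hbump)) fun i hi => ?_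
  rw [setCell_of_ne _ (Or.inr hi.ne)]
  exact hS.rowLE hi hlt

end Unbump

end Bumping

section Insertion

variable {lam : ℕ → ℕ}

theorem insertFrom_of_bumpPos_eq {S : ℕ → ℕ → ℕ} {x r : ℕ} (h : bumpPos k lam S x r = lam r)
    (fuel : ℕ) : insertFrom k lam fuel S x r = (setCell S r (lam r) x, r) := by
  cases fuel <;> simp [insertFrom, h]

theorem insertFrom_spec_of_bumpPos_eq (hanti : Antitone lam) {S : ℕ → ℕ → ℕ} {x r : ℕ}
    (hS : SuperSSYT k ℓ lam S) (hx : 1 ≤ x ∧ x ≤ k + ℓ) (hinv : InsertInv k lam S x r)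
    (h : bumpPos k lam S x r = lam r) (fuel : ℕ) :
    let p := insertFrom k lam fuel S x r
    (∀ a, a + 1 = p.2 → lam p.2 < lam a) ∧
      SuperSSYT k ℓ (update lam p.2 (lam p.2 + 1)) p.1 ∧
      reverseFrom k lam p.2 (setCell p.1 p.2 (lam p.2) 0) (p.1 p.2 (lam p.2)) =
        reverseFrom k lam r S x := by
  obtain ⟨hcorner, hS'⟩ := hS.append hanti hx hinv h
  rw [insertFrom_of_bumpPos_eq h]
  refine ⟨hcorner, hS', ?_⟩
  dsimp only
  rw [setCell_setCell, setCell_eq_self (hS.2.1 r _ le_rfl), setCell_same]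

theorem insertFrom_spec (hanti : Antitone lam) (fuel : ℕ) :
    ∀ {S : ℕ → ℕ → ℕ} {x r : ℕ}, SuperSSYT k ℓ lam S → 1 ≤ x ∧ x ≤ k + ℓ →
      InsertInv k lam S x r → lam (r + fuel) = 0 →
      let p := insertFrom k lam fuel S x r
      (∀ a, a + 1 = p.2 → lam p.2 < lam a) ∧
        SuperSSYT k ℓ (update lam p.2 (lam p.2 + 1)) p.1 ∧
        reverseFrom k lam p.2 (setCell p.1 p.2 (lam p.2) 0) (p.1 p.2 (lam p.2)) =
          reverseFrom k lam r S x := by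
  induction fuel with
  | zero =>
    intro S x r hS hx hinv hend
    rw [add_zero] at hend
    have := bumpPos_le (k := k) (lam := lam) (S := S) x r
    exact insertFrom_spec_of_bumpPos_eq hanti hS hx hinv (by omega) 0
  | succ fuel ih =>
    intro S x r hS hx hinv hend
    by_cases hb : bumpPos k lam S x r < lam r
    · obtain ⟨hcorner, hS', hrev⟩ := ih (hS.bump hx hinv hb) (hS.1 r _ hb) (insertInv_bump hS hb)
        (by rwa [add_right_comm])
      simp only [insertFrom, if_pos hb]
      refine ⟨hcorner, hS', hrev.trans ?_⟩
      rw [reverseFrom, unbumpPos_bump hS hb, setCell_setCell, setCell_eq_self rfl, setCell_same]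
    · exact insertFrom_spec_of_bumpPos_eq hanti hS hx hinv
        ((bumpPos_le x r).antisymm (not_lt.1 hb)) (fuel + 1)

theorem reverseFrom_spec (hanti : Antitone lam) (r : ℕ) :
    ∀ {S : ℕ → ℕ → ℕ} {y : ℕ}, SuperSSYT k ℓ lam S → 1 ≤ y ∧ y ≤ k + ℓ →
      ReverseInv k lam S y r →
      let p := reverseFrom k lam r S y
      SuperSSYT k ℓ lam p.1 ∧ (1 ≤ p.2 ∧ p.2 ≤ k + ℓ) ∧
        ∀ fuel, insertFrom k lam (r + fuel) p.1 p.2 0 = insertFrom k lam fuel S y r := by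
  induction r with
  | zero => intro S y hS hy _; exact ⟨hS, hy, fun fuel => by rw [zero_add]; rfl⟩
  | succ r ih =>
    intro S y hS hy hinv
    obtain ⟨hS', hy', hins⟩ := ih (hS.unbump hy hinv) (hS.1 r _ (unbumpPos_lt hinv))
      (reverseInv_unbump hanti hS hinv)
    refine ⟨hS', hy', fun fuel => ?_⟩
    rw [reverseFrom, add_assoc, add_comm 1 fuel, hins, insertFrom, bumpPos_unbump hS hinv,
      if_pos (unbumpPos_lt hinv), setCell_setCell, setCell_eq_self rfl, setCell_same]

end Insertion

section Step

variable {n : ℕ} {lam : ℕ → ℕ} {S : ℕ → ℕ → ℕ}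

/-- A tableau with `n` boxes has at most `n` rows, so `n` is enough fuel. -/
def superInsert (k : ℕ) (lam : ℕ → ℕ) (n : ℕ) (S : ℕ → ℕ → ℕ) (x : ℕ) : (ℕ → ℕ → ℕ) × ℕ :=
  insertFrom k lam n S x 0

theorem superInsert_spec (hlam : IsPartitionOf n lam) (hS : SuperSSYT k ℓ lam S) {x : ℕ}
    (hx : 1 ≤ x ∧ x ≤ k + ℓ) :
    let p := superInsert k lam n S x
    (∀ a, a + 1 = p.2 → lam p.2 < lam a) ∧ IsPartitionOf (n + 1) (update lam p.2 (lam p.2 + 1)) ∧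
      SuperSSYT k ℓ (update lam p.2 (lam p.2 + 1)) p.1 ∧
      reverseFrom k lam p.2 (setCell p.1 p.2 (lam p.2) 0) (p.1 p.2 (lam p.2)) = (S, x) := by
  obtain ⟨hcorner, hS', hrev⟩ := insertFrom_spec hlam.1 n hS hx
    (fun a ha => absurd ha a.succ_ne_zero) (by rw [zero_add]; exact hlam.2.1 n le_rfl)
  exact ⟨hcorner, hlam.update_succ hcorner, hS', hrev⟩

theorem superInsert_reverseFrom (hlam : IsPartitionOf (n + 1) lam) (hS : SuperSSYT k ℓ lam S)
    {r c : ℕ} (hc : c + 1 = lam r) (hbelow : lam (r + 1) ≤ c) :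
    let p := reverseFrom k (update lam r c) r (setCell S r c 0) (S r c)
    SuperSSYT k ℓ (update lam r c) p.1 ∧ (1 ≤ p.2 ∧ p.2 ≤ k + ℓ) ∧
      superInsert k (update lam r c) n p.1 p.2 = (S, r) := by
  have hμ := hlam.update_of_succ_eq hc hbelow
  have hinv : ReverseInv k (update lam r c) (setCell S r c 0) (S r c) r := by
    rintro a rfl
    refine ⟨c, ?_, ?_, fun j hj hjc => ?_⟩
    · rw [update_of_ne (by omega)]; have := hlam.1 _ _ (Nat.le_add_right a 1); omega
    · rw [setCell_of_ne _ (Or.inl (by omega))]; exact hS.colLT (by omega)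
    · rw [update_self] at hjc; omega
  obtain ⟨hS', hy, hins⟩ := reverseFrom_spec hμ.1 r (hS.removeCorner hc hbelow)
    (hS.1 r c (by omega)) hinv
  refine ⟨hS', hy, ?_⟩
  have hbump : bumpPos k (update lam r c) (setCell S r c 0) (S r c) r = update lam r c r := by
    rw [update_self]
    refine bumpPos_eq (by rw [update_self]) (Or.inl (update_self r c lam).symm) fun i hi => ?_
    rw [setCell_of_ne _ (Or.inr hi.ne)]
    exact hS.rowLE hi (by omega)
  have hr : r ≤ n := Nat.lt_succ_iff.1 (hlam.lt_of_pos (by omega))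
  rw [superInsert, ← Nat.add_sub_cancel' hr, hins, insertFrom_of_bumpPos_eq hbump, update_self,
    setCell_setCell, setCell_eq_self rfl]

end Step

abbrev TableauPairs (n k ℓ : ℕ) : Type :=
  Σ lam : {f : ℕ → ℕ // IsPartitionOf n f},
    {S : ℕ → ℕ → ℕ // SuperSSYT k ℓ lam.1 S} × {T : ℕ → ℕ → ℕ // IsStandardTab n lam.1 T}

variable {n : ℕ}

theorem TableauPairs.ext {t t' : TableauPairs n k ℓ} (h₁ : t.1.1 = t'.1.1)
    (h₂ : t.2.1.1 = t'.2.1.1) (h₃ : t.2.2.1 = t'.2.2.1) : t = t' := by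
  obtain ⟨⟨lam, _⟩, ⟨S, _⟩, ⟨T, _⟩⟩ := t
  obtain ⟨⟨lam', _⟩, ⟨S', _⟩, ⟨T', _⟩⟩ := t'
  dsimp only at h₁ h₂ h₃
  subst h₁ h₂ h₃
  rfl

instance : Unique (TableauPairs 0 k ℓ) where
  default := ⟨⟨0, fun _ _ _ => le_rfl, fun _ _ => rfl, rfl⟩,
    ⟨0, by simp [SuperSSYT]⟩, ⟨0, by simp [IsStandardTab]; intro v hv; omega⟩⟩
  uniq t := by
    have hlam : t.1.1 = 0 := funext fun a => t.1.2.2.1 a a.zero_le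
    refine TableauPairs.ext hlam (funext₂ fun a b => ?_) (funext₂ fun a b => ?_)
    · exact t.2.1.2.2.1 a b (by simp [hlam])
    · exact t.2.2.2.2.1 a b (by simp [hlam])

/-- The letter `z : Fin (k + ℓ)` is the tableau entry `z + 1`. -/
def insertStep : TableauPairs n k ℓ × Fin (k + ℓ) → TableauPairs (n + 1) k ℓ
  | (⟨⟨lam, hlam⟩, ⟨S, hS⟩, ⟨T, hT⟩⟩, z) =>
    have h := superInsert_spec hlam hS (x := z + 1) ⟨by omega, z.isLt⟩
    let p := superInsert k lam n S (z + 1)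
    ⟨⟨update lam p.2 (lam p.2 + 1), h.2.1⟩, ⟨p.1, h.2.2.1⟩,
      ⟨setCell T p.2 (lam p.2) (n + 1), hT.addCell hlam.1 h.1⟩⟩

theorem insertStep_injective : Injective (insertStep (n := n) (k := k) (ℓ := ℓ)) := by
  rintro ⟨⟨⟨lam, hlam⟩, ⟨S, hS⟩, ⟨T, hT⟩⟩, z⟩ ⟨⟨⟨lam', hlam'⟩, ⟨S', hS'⟩, ⟨T', hT'⟩⟩, z'⟩ h
  dsimp only at hS hT hS' hT'
  obtain ⟨hcorner, -, -, hrev⟩ := superInsert_spec hlam hS (x := z + 1) ⟨by omega, z.isLt⟩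
  obtain ⟨-, -, -, hrev'⟩ := superInsert_spec hlam' hS' (x := z' + 1) ⟨by omega, z'.isLt⟩
  set p := superInsert k lam n S (z + 1)
  set p' := superInsert k lam' n S' (z' + 1)
  have hshape : update lam p.2 (lam p.2 + 1) = update lam' p'.2 (lam' p'.2 + 1) :=
    congrArg (fun t => t.1.1) h
  have hS₁ : p.1 = p'.1 := congrArg (fun t => t.2.1.1) h
  have hT₁ : setCell T p.2 (lam p.2) (n + 1) = setCell T' p'.2 (lam' p'.2) (n + 1) :=
    congrArg (fun t => t.2.2.1) h
  -- the new box is the cell labelled `n + 1`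
  have hcell : (p.2, lam p.2) = (p'.2, lam' p'.2) :=
    (hT.addCell hlam.1 hcorner).cell_eq (lt_update_succ_iff.2 (Or.inr ⟨rfl, rfl⟩))
      (by rw [hshape]; exact lt_update_succ_iff.2 (Or.inr ⟨rfl, rfl⟩))
      (by rw [setCell_same, hT₁, setCell_same])
  obtain ⟨hr, hc⟩ := Prod.mk.inj hcell
  rw [hc, hr] at hshape hT₁
  obtain rfl : lam = lam' := eq_of_update_eq_update hshape (hr ▸ hc)
  obtain rfl : T = T' := eq_of_setCell_eq_setCell hT₁ <| by
    rw [hT.2.1 _ _ le_rfl, hT'.2.1 _ _ le_rfl]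
  have hSz : (S, (z : ℕ) + 1) = (S', (z' : ℕ) + 1) := by rw [← hrev, ← hrev', hS₁, hr]
  simp only [Prod.mk.injEq, add_left_inj] at hSz
  exact Prod.ext (TableauPairs.ext rfl hSz.1 rfl) (Fin.ext hSz.2)

theorem insertStep_surjective : Surjective (insertStep (n := n) (k := k) (ℓ := ℓ)) := by
  rintro ⟨⟨lam, hlam⟩, ⟨S, hS⟩, ⟨T, hT⟩⟩
  dsimp only at hS hT
  obtain ⟨⟨r, c⟩, ⟨hrc, hval⟩, -⟩ := hT.2.2.1 (n + 1) n.succ_pos le_rfl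
  dsimp only at hrc hval
  obtain ⟨hc, hbelow⟩ := hT.corner_of_eq_succ hrc hval
  obtain ⟨hS', hy, hins⟩ := superInsert_reverseFrom (n := n) hlam hS hc hbelow
  set p := reverseFrom k (update lam r c) r (setCell S r c 0) (S r c)
  refine ⟨(⟨⟨update lam r c, hlam.update_of_succ_eq hc hbelow⟩, ⟨p.1, hS'⟩,
    ⟨setCell T r c 0, hT.removeCorner hc hbelow hval⟩⟩, ⟨p.2 - 1, by omega⟩), ?_⟩
  have hins' := Nat.sub_add_cancel hy.1 ▸ hins
  apply TableauPairs.ext <;> simp only [insertStep, Fin.val_mk, hins']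
  · rw [update_idem, update_self, hc, update_eq_self]
  · rw [update_self, setCell_setCell, setCell_eq_self hval]

noncomputable def insertStepEquiv (n k ℓ : ℕ) :
    TableauPairs n k ℓ × Fin (k + ℓ) ≃ TableauPairs (n + 1) k ℓ :=
  Equiv.ofBijective insertStep ⟨insertStep_injective, insertStep_surjective⟩


end SuperRSK

/-- The RSK superinsertion bijection: sequences of `n` letters from an alphabet
with `k` even and `ℓ` odd letters correspond bijectively to pairs `(S,T)` of a
`(k,ℓ)`-semistandard tableau `S` and a standard tableau `T` of the same shape,
a partition of `n` (necessarily a `(k,ℓ)`-hook partition, since otherwise no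
`(k,ℓ)`-semistandard tableau of that shape exists). -/
theorem stmt_12 (n k ℓ : ℕ) :
    Nonempty ((Fin n → Fin (k + ℓ)) ≃
      (Σ lam : {f : ℕ → ℕ // IsPartitionOf n f},
        {S : ℕ → ℕ → ℕ // SuperSSYT k ℓ lam.1 S} ×
        {T : ℕ → ℕ → ℕ // IsStandardTab n lam.1 T})) := by
  induction n with
  | zero => exact ⟨Equiv.ofUnique _ (SuperRSK.TableauPairs 0 k ℓ)⟩
  | succ n ih =>
    obtain ⟨e⟩ := ih
    exact ⟨(Fin.snocEquiv fun _ => Fin (k + ℓ)).symm.trans <| (Equiv.prodComm _ _).trans <|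
      (e.prodCongr (Equiv.refl _)).trans (SuperRSK.insertStepEquiv n k ℓ)⟩
end

section
/- The supersymmetric Schur function $S_\lambda(\mathbf{x}/\mathbf{y}) = \sum_{\mu \subseteq \lambda} (-1)^{|\lambda| - |\mu|} S_\mu(\mathbf{x}) S_{\lambda'/\mu'}(\mathbf{y})$, with $\mathbf{x}$ of size $k$ and $\mathbf{y}$ of size $\ell$, equals the tableau generating function $\sum_{T} \prod_{(a,b) \in \lambda} (-1)^{\deg z_{a,b}} z_{a,b}$ summed over $(k,\ell)$-semistandard tableaux $T$ of shape $\lambda$, where $\deg x_i = 0$ and $\deg y_j = 1$. -/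
open scoped BigOperators

/-- The conjugate partition of `lam` (a partition of `n`, so all parts
are `≤ n`): `lam' b = #{a : lam a > b}`. -/
def conj (n : ℕ) (lam : ℕ → ℕ) (b : ℕ) : ℕ :=
  ((Finset.range n).filter (fun a => b < lam a)).card

/-- Semistandard tableau of shape `mu` with entries in `{1,…,k}` (rows weakly
increase, columns strictly increase), `0` off the shape. -/
def IsSSYT (k : ℕ) (mu : ℕ → ℕ) (T : ℕ → ℕ → ℕ) : Prop :=
  (∀ a b, b < mu a → 1 ≤ T a b ∧ T a b ≤ k) ∧
  (∀ a b, mu a ≤ b → T a b = 0) ∧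
  (∀ a b, b + 1 < mu a → T a b ≤ T a (b + 1)) ∧
  (∀ a b, b < mu (a + 1) → T a b < T (a + 1) b)

/-- Semistandard skew tableau of shape `lamc/muc` with entries in `{1,…,ℓ}`
(rows weakly increase, columns strictly increase), `0` off the skew shape. -/
def IsSkewSSYT (ℓ : ℕ) (lamc muc : ℕ → ℕ) (T : ℕ → ℕ → ℕ) : Prop :=
  (∀ a b, muc a ≤ b → b < lamc a → 1 ≤ T a b ∧ T a b ≤ ℓ) ∧
  (∀ a b, ¬(muc a ≤ b ∧ b < lamc a) → T a b = 0) ∧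
  (∀ a b, muc a ≤ b → b + 1 < lamc a → T a b ≤ T a (b + 1)) ∧
  (∀ a b, muc a ≤ b → b < lamc (a + 1) → T a b < T (a + 1) b)

open Finset


lemma downclosed_eq_range (s : Finset ℕ) (h : ∀ a ∈ s, ∀ b, b ≤ a → b ∈ s) :
    s = Finset.range s.card := by
  rcases s.eq_empty_or_nonempty with rfl | hne
  · simp
  · have hmax := s.max'_mem hne
    have hs : s = Finset.range (s.max' hne + 1) := by
      apply Finset.Subset.antisymm
      · intro a ha; exact Finset.mem_range.2 (Nat.lt_succ_of_le (s.le_max' a ha))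
      · intro b hb; exact h _ hmax _ (Nat.lt_succ_iff.1 (Finset.mem_range.1 hb))
    rw [hs, Finset.card_range]

lemma mem_downclosed_iff (s : Finset ℕ) (h : ∀ a ∈ s, ∀ b, b ≤ a → b ∈ s) (a : ℕ) :
    a ∈ s ↔ a < s.card := by
  conv_lhs => rw [downclosed_eq_range s h]
  exact Finset.mem_range

lemma lt_conj_iff (n : ℕ) (g : ℕ → ℕ) (hanti : ∀ i j, i ≤ j → g j ≤ g i)
    (h0 : ∀ a, n ≤ a → g a = 0) (a b : ℕ) : a < conj n g b ↔ b < g a := by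
  have hdc : ∀ p ∈ (Finset.range n).filter (fun a => b < g a), ∀ q, q ≤ p →
      q ∈ (Finset.range n).filter (fun a => b < g a) := by
    intro p hp q hq
    simp only [Finset.mem_filter, Finset.mem_range] at hp ⊢
    exact ⟨lt_of_le_of_lt hq hp.1, lt_of_lt_of_le hp.2 (hanti q p hq)⟩
  rw [conj, ← mem_downclosed_iff _ hdc, Finset.mem_filter, Finset.mem_range]
  constructor
  · exact fun h => h.2
  · intro hb
    refine ⟨?_, hb⟩
    by_contra hn
    push_neg at hn
    rw [h0 a hn] at hb; omega

lemma conj_mono (n : ℕ) {g g' : ℕ → ℕ} (h : ∀ a, g a ≤ g' a) (b : ℕ) :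
    conj n g b ≤ conj n g' b := by
  apply Finset.card_le_card
  intro a ha
  simp only [Finset.mem_filter, Finset.mem_range] at ha ⊢
  exact ⟨ha.1, lt_of_lt_of_le ha.2 (h a)⟩

lemma conj_le (n : ℕ) (g : ℕ → ℕ) (b : ℕ) : conj n g b ≤ n := by
  rw [conj]
  exact le_trans (Finset.card_filter_le _ _) (le_of_eq (Finset.card_range n))

/-- `x`-subshape of a super tableau: number of entries `≤ k` in row `a`. -/
def muOf (k : ℕ) (lam : ℕ → ℕ) (T : ℕ → ℕ → ℕ) (a : ℕ) : ℕ :=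
  ((Finset.range (lam a)).filter (fun b => T a b ≤ k)).card

def sOf (k : ℕ) (lam : ℕ → ℕ) (T : ℕ → ℕ → ℕ) (a b : ℕ) : ℕ :=
  if b < muOf k lam T a then T a b else 0

def yOf (n k : ℕ) (lam : ℕ → ℕ) (T : ℕ → ℕ → ℕ) (b a : ℕ) : ℕ :=
  if conj n (muOf k lam T) b ≤ a ∧ a < conj n lam b then T a b - k else 0

def tOf (k : ℕ) (lam mu : ℕ → ℕ) (S Y : ℕ → ℕ → ℕ) (a b : ℕ) : ℕ :=
  if b < mu a then S a b else if b < lam a then Y b a + k else 0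

section chains
variable {n k ℓ : ℕ} {lam : ℕ → ℕ} {T : ℕ → ℕ → ℕ}

lemma super_row_mono (hT : SuperSSYT k ℓ lam T) {a b b' : ℕ} (hbb : b ≤ b')
    (hb' : b' < lam a) : T a b ≤ T a b' := by
  induction b', hbb using Nat.le_induction with
  | base => exact le_refl _
  | succ m hm ih =>
      exact le_trans (ih (by omega)) (hT.2.2.1 a m hb').1

lemma super_col_mono (hlam : ∀ i j, i ≤ j → lam j ≤ lam i) (hT : SuperSSYT k ℓ lam T)
    {a a' b : ℕ} (haa : a ≤ a') (hb : b < lam a') : T a b ≤ T a' b := by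
  induction a', haa using Nat.le_induction with
  | base => exact le_refl _
  | succ m hm ih =>
      exact le_trans (ih (lt_of_lt_of_le hb (hlam m (m+1) (by omega)))) (hT.2.2.2 m b hb).1

lemma lt_muOf_iff (hT : SuperSSYT k ℓ lam T) (a b : ℕ) :
    b < muOf k lam T a ↔ b < lam a ∧ T a b ≤ k := by
  have hdc : ∀ p ∈ (Finset.range (lam a)).filter (fun b => T a b ≤ k), ∀ q, q ≤ p →
      q ∈ (Finset.range (lam a)).filter (fun b => T a b ≤ k) := by
    intro p hp q hq
    simp only [Finset.mem_filter, Finset.mem_range] at hp ⊢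
    exact ⟨lt_of_le_of_lt hq hp.1, le_trans (super_row_mono hT hq hp.1) hp.2⟩
  rw [muOf, ← mem_downclosed_iff _ hdc, Finset.mem_filter, Finset.mem_range]

lemma muOf_le_lam (a : ℕ) : muOf k lam T a ≤ lam a :=
  le_trans (Finset.card_filter_le _ _) (le_of_eq (Finset.card_range _))

lemma muOf_anti (hlam : ∀ i j, i ≤ j → lam j ≤ lam i) (hT : SuperSSYT k ℓ lam T) :
    ∀ i j, i ≤ j → muOf k lam T j ≤ muOf k lam T i := by
  have adj : ∀ a, muOf k lam T (a + 1) ≤ muOf k lam T a := by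
    intro a
    by_contra h
    push_neg at h
    set b := muOf k lam T a with hb
    have hb1 : b < muOf k lam T (a+1) := h
    rw [lt_muOf_iff hT] at hb1
    have hbig : ¬ (b < lam a ∧ T a b ≤ k) := by
      rw [← lt_muOf_iff hT]; omega
    have hblam : b < lam a := lt_of_lt_of_le hb1.1 (hlam a (a+1) (by omega))
    have hTbig : k < T a b := by omega
    have hcol := (hT.2.2.2 a b hb1.1).1
    omega
  exact fun i j hij => antitone_nat_of_succ_le adj hij
end chains
section fwd
variable {n k ℓ : ℕ} {lam : ℕ → ℕ} {T : ℕ → ℕ → ℕ}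

lemma muOf_zero (hlam0 : ∀ a, n ≤ a → lam a = 0) (a : ℕ) (ha : n ≤ a) :
    muOf k lam T a = 0 :=
  Nat.le_zero.1 (le_trans (muOf_le_lam a) (le_of_eq (hlam0 a ha)))

lemma sOf_SSYT (hlam : ∀ i j, i ≤ j → lam j ≤ lam i) (hT : SuperSSYT k ℓ lam T) :
    IsSSYT k (muOf k lam T) (sOf k lam T) := by
  refine ⟨?_, ?_, ?_, ?_⟩
  · intro a b hb
    have hc := (lt_muOf_iff hT a b).1 hb
    simp only [sOf, if_pos hb]
    exact ⟨(hT.1 a b hc.1).1, hc.2⟩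
  · intro a b hb
    have h : ¬ b < muOf k lam T a := by omega
    simp only [sOf, if_neg h]
  · intro a b hb
    have hb0 : b < muOf k lam T a := by omega
    simp only [sOf, if_pos hb, if_pos hb0]
    have hlt : b + 1 < lam a := lt_of_lt_of_le hb (muOf_le_lam a)
    exact (hT.2.2.1 a b hlt).1
  · intro a b hb
    have hba : b < muOf k lam T a := lt_of_lt_of_le hb (muOf_anti hlam hT a (a+1) (by omega))
    simp only [sOf, if_pos hb, if_pos hba]
    have hblam : b < lam (a+1) := lt_of_lt_of_le hb (muOf_le_lam (a+1))
    have hc := hT.2.2.2 a b hblam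
    have hsmall : T a b ≤ k := ((lt_muOf_iff hT a b).1 hba).2
    rcases eq_or_lt_of_le hc.1 with he | hl
    · exact absurd (hc.2 he) (by omega)
    · exact hl

lemma yOf_skew (hlam : ∀ i j, i ≤ j → lam j ≤ lam i) (hlam0 : ∀ a, n ≤ a → lam a = 0)
    (hT : SuperSSYT k ℓ lam T) :
    IsSkewSSYT ℓ (conj n lam) (conj n (muOf k lam T)) (yOf n k lam T) := by
  have hclam : ∀ a b, a < conj n lam b ↔ b < lam a :=
    fun a b => lt_conj_iff n lam hlam hlam0 a b
  have hcmu : ∀ a b, a < conj n (muOf k lam T) b ↔ b < muOf k lam T a :=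
    fun a b => lt_conj_iff n _ (muOf_anti hlam hT) (muOf_zero hlam0) a b
  refine ⟨?_, ?_, ?_, ?_⟩
  · intro B A h1 h2
    have hc : conj n (muOf k lam T) B ≤ A ∧ A < conj n lam B := ⟨h1, h2⟩
    simp only [yOf, if_pos hc]
    have hBlam : B < lam A := (hclam A B).1 h2
    have hBmu : ¬ B < muOf k lam T A := by rw [← hcmu]; omega
    have hTbig : k < T A B := by
      have := lt_muOf_iff hT A B; omega
    have hTub := (hT.1 A B hBlam).2
    omega
  · intro B A h
    simp only [yOf, if_neg h]
  · intro B A h1 h2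
    have hc1 : conj n (muOf k lam T) B ≤ A ∧ A < conj n lam B := ⟨h1, by omega⟩
    have hc2 : conj n (muOf k lam T) B ≤ A + 1 ∧ A + 1 < conj n lam B := ⟨by omega, h2⟩
    simp only [yOf, if_pos hc1, if_pos hc2]
    have hBlam1 : B < lam (A+1) := (hclam (A+1) B).1 h2
    have hcol := (hT.2.2.2 A B hBlam1).1
    omega
  · intro B A h1 h2
    have hB1lam : B + 1 < lam A := (hclam A (B+1)).1 h2
    have hrow := hT.2.2.1 A B hB1lam
    have hBmu : ¬ B < muOf k lam T A := by rw [← hcmu]; omega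
    have hBlam : B < lam A := by omega
    have hTbig : k < T A B := by
      have := lt_muOf_iff hT A B; omega
    have hstrict : T A B < T A (B+1) := by
      rcases eq_or_lt_of_le hrow.1 with he | h
      · exact absurd (hrow.2 he) (by omega)
      · exact h
    have hm2 : conj n (muOf k lam T) (B+1) ≤ A := by
      rw [← not_lt, hcmu]
      have := lt_muOf_iff hT A (B+1); omega
    have hc1 : conj n (muOf k lam T) B ≤ A ∧ A < conj n lam B := ⟨h1, (hclam A B).2 hBlam⟩
    have hc2 : conj n (muOf k lam T) (B+1) ≤ A ∧ A < conj n lam (B+1) := ⟨hm2, h2⟩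
    simp only [yOf, if_pos hc1, if_pos hc2]
    omega

lemma tOf_round (hlam : ∀ i j, i ≤ j → lam j ≤ lam i) (hlam0 : ∀ a, n ≤ a → lam a = 0)
    (hT : SuperSSYT k ℓ lam T) :
    tOf k lam (muOf k lam T) (sOf k lam T) (yOf n k lam T) = T := by
  have hclam : ∀ a b, a < conj n lam b ↔ b < lam a :=
    fun a b => lt_conj_iff n lam hlam hlam0 a b
  have hcmu : ∀ a b, a < conj n (muOf k lam T) b ↔ b < muOf k lam T a :=
    fun a b => lt_conj_iff n _ (muOf_anti hlam hT) (muOf_zero hlam0) a b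
  funext a b
  by_cases h1 : b < muOf k lam T a
  · simp only [tOf, if_pos h1, sOf]
  · by_cases h2 : b < lam a
    · have hc : conj n (muOf k lam T) b ≤ a ∧ a < conj n lam b := by
        constructor
        · rw [← not_lt, hcmu]; exact h1
        · exact (hclam a b).2 h2
      have hTbig : k < T a b := by
        have := lt_muOf_iff hT a b; omega
      simp only [tOf, if_neg h1, if_pos h2, yOf, if_pos hc]
      omega
    · simp only [tOf, if_neg h1, if_neg h2]
      exact (hT.2.1 a b (by omega)).symm
end fwd
section bwd
variable {n k ℓ : ℕ} {lam mu : ℕ → ℕ} {S Y : ℕ → ℕ → ℕ}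

lemma tOf_eval_small (a b : ℕ) (h : b < mu a) : tOf k lam mu S Y a b = S a b := by
  simp only [tOf, if_pos h]

lemma tOf_eval_big (a b : ℕ) (h1 : mu a ≤ b) (h2 : b < lam a) :
    tOf k lam mu S Y a b = Y b a + k := by
  simp only [tOf, if_neg (by omega : ¬ b < mu a), if_pos h2]

lemma tOf_eval_off (a b : ℕ) (hm : mu a ≤ b) (h : lam a ≤ b) : tOf k lam mu S Y a b = 0 := by
  simp only [tOf, if_neg (by omega : ¬ b < mu a), if_neg (by omega : ¬ b < lam a)]

variable (hlam : ∀ i j, i ≤ j → lam j ≤ lam i) (hlam0 : ∀ a, n ≤ a → lam a = 0)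
  (hmu : ∀ i j, i ≤ j → mu j ≤ mu i) (hmul : ∀ a, mu a ≤ lam a)
  (hS : IsSSYT k mu S) (hY : IsSkewSSYT ℓ (conj n lam) (conj n mu) Y)

include hlam hlam0 hmu hmul hY in
lemma yVal : ∀ a b, mu a ≤ b → b < lam a → 1 ≤ Y b a ∧ Y b a ≤ ℓ := by
  intro a b h1 h2
  have hmu0 : ∀ a, n ≤ a → mu a = 0 := fun a ha => by
    have := hmul a; have := hlam0 a ha; omega
  have hclam : a < conj n lam b := (lt_conj_iff n lam hlam hlam0 a b).2 h2
  have hcmu : conj n mu b ≤ a := by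
    rw [← not_lt, lt_conj_iff n mu hmu hmu0]; omega
  exact hY.1 b a hcmu hclam

include hlam hlam0 hmu hmul hS hY in
lemma tOf_super : SuperSSYT k ℓ lam (tOf k lam mu S Y) := by
  have hmu0 : ∀ a, n ≤ a → mu a = 0 := fun a ha => by
    have := hmul a; have := hlam0 a ha; omega
  have hclam : ∀ a b, a < conj n lam b ↔ b < lam a :=
    fun a b => lt_conj_iff n lam hlam hlam0 a b
  have hcmu : ∀ a b, a < conj n mu b ↔ b < mu a :=
    fun a b => lt_conj_iff n mu hmu hmu0 a b
  have hYv := yVal hlam hlam0 hmu hmul hY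
  refine ⟨?_, ?_, ?_, ?_⟩
  · intro a b hb
    by_cases h1 : b < mu a
    · rw [tOf_eval_small a b h1]
      have := hS.1 a b h1
      omega
    · rw [tOf_eval_big a b (by omega) hb]
      have := hYv a b (by omega) hb
      omega
  · intro a b hb
    exact tOf_eval_off a b (le_trans (hmul a) hb) hb
  · intro a b hb
    by_cases h1 : b + 1 < mu a
    · rw [tOf_eval_small a b (by omega), tOf_eval_small a (b+1) h1]
      have h2 := hS.2.2.1 a b h1
      have h3 := (hS.1 a b (by omega)).2
      exact ⟨h2, fun _ => h3⟩
    · by_cases h2 : b < mu a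
      · rw [tOf_eval_small a b h2, tOf_eval_big a (b+1) (by omega) hb]
        have h3 := (hS.1 a b h2).2
        have h4 := (hYv a (b+1) (by omega) hb).1
        exact ⟨by omega, fun _ => h3⟩
      · rw [tOf_eval_big a b (by omega) (by omega), tOf_eval_big a (b+1) (by omega) hb]
        have hstrict : Y b a < Y (b+1) a := by
          apply hY.2.2.2 b a
          · rw [← not_lt, hcmu]; omega
          · rw [hclam]; exact hb
        refine ⟨by omega, fun he => by omega⟩
  · intro a b hb
    have hblama : b < lam a := lt_of_lt_of_le hb (hlam a (a+1) (by omega))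
    by_cases h1 : b < mu (a+1)
    · have h2 : b < mu a := lt_of_lt_of_le h1 (hmu a (a+1) (by omega))
      rw [tOf_eval_small a b h2, tOf_eval_small (a+1) b h1]
      have hstrict := hS.2.2.2 a b h1
      refine ⟨by omega, fun he => by omega⟩
    · by_cases h2 : b < mu a
      · rw [tOf_eval_small a b h2, tOf_eval_big (a+1) b (by omega) hb]
        have h3 := (hS.1 a b h2).2
        have h4 := (hYv (a+1) b (by omega) hb).1
        refine ⟨by omega, fun he => by omega⟩
      · rw [tOf_eval_big a b (by omega) hblama, tOf_eval_big (a+1) b (by omega) hb]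
        have hrow : Y b a ≤ Y b (a+1) := by
          apply hY.2.2.1 b a
          · rw [← not_lt, hcmu]; omega
          · rw [hclam]; exact hb
        have h4 := (hYv a b (by omega) hblama).1
        refine ⟨by omega, fun _ => by omega⟩

include hlam hlam0 hmu hmul hS hY in
lemma muOf_tOf : muOf k lam (tOf k lam mu S Y) = mu := by
  funext a
  have hYv := yVal hlam hlam0 hmu hmul hY
  rw [muOf]
  have : (Finset.range (lam a)).filter (fun b => tOf k lam mu S Y a b ≤ k)
      = Finset.range (mu a) := by
    ext b
    simp only [Finset.mem_filter, Finset.mem_range]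
    constructor
    · rintro ⟨h1, h2⟩
      by_contra h3
      rw [tOf_eval_big a b (by omega) h1] at h2
      have := (hYv a b (by omega) h1).1
      omega
    · intro h1
      refine ⟨lt_of_lt_of_le h1 (hmul a), ?_⟩
      rw [tOf_eval_small a b h1]
      exact (hS.1 a b h1).2
  rw [this, Finset.card_range]

include hlam hlam0 hmu hmul hS hY in
lemma sOf_tOf : sOf k lam (tOf k lam mu S Y) = S := by
  funext a b
  rw [sOf, muOf_tOf hlam hlam0 hmu hmul hS hY]
  by_cases h1 : b < mu a
  · rw [if_pos h1, tOf_eval_small a b h1]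
  · rw [if_neg h1, (hS.2.1 a b (by omega)).symm]

include hlam hlam0 hmu hmul hS hY in
lemma yOf_tOf : yOf n k lam (tOf k lam mu S Y) = Y := by
  have hmu0 : ∀ a, n ≤ a → mu a = 0 := fun a ha => by
    have := hmul a; have := hlam0 a ha; omega
  funext b a
  rw [yOf, muOf_tOf hlam hlam0 hmu hmul hS hY]
  by_cases h : conj n mu b ≤ a ∧ a < conj n lam b
  · rw [if_pos h]
    have h2 : b < lam a := (lt_conj_iff n lam hlam hlam0 a b).1 h.2
    have h1 : mu a ≤ b := by
      have := lt_conj_iff n mu hmu hmu0 a b; omega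
    rw [tOf_eval_big a b h1 h2]
    omega
  · rw [if_neg h]
    exact (hY.2.1 b a h).symm
end bwd
section finiteness

lemma finite_tab {n m : ℕ} {P : (ℕ → ℕ → ℕ) → Prop}
    (hz : ∀ T, P T → ∀ a b, n ≤ a ∨ n ≤ b → T a b = 0)
    (hb : ∀ T, P T → ∀ a b, T a b ≤ m) : Finite {T : ℕ → ℕ → ℕ // P T} := by
  apply Finite.of_injective
    (fun T : {T : ℕ → ℕ → ℕ // P T} => fun p : Fin n × Fin n =>
      (⟨T.1 p.1 p.2, Nat.lt_succ_of_le (hb T.1 T.2 p.1 p.2)⟩ : Fin (m+1)))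
  intro T T' he
  apply Subtype.ext
  funext a b
  by_cases ha : a < n
  · by_cases hbn : b < n
    · have := congrFun he (⟨a, ha⟩, ⟨b, hbn⟩)
      exact congrArg Fin.val this
    · rw [hz T.1 T.2 a b (Or.inr (by omega)), hz T'.1 T'.2 a b (Or.inr (by omega))]
  · rw [hz T.1 T.2 a b (Or.inl (by omega)), hz T'.1 T'.2 a b (Or.inl (by omega))]

lemma finite_mu {n : ℕ} {lam : ℕ → ℕ} (hlam : ∀ i j, i ≤ j → lam j ≤ lam i)
    (hlam0 : ∀ a, n ≤ a → lam a = 0) :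
    Finite {g : ℕ → ℕ // (∀ i j, i ≤ j → g j ≤ g i) ∧ ∀ a, g a ≤ lam a} := by
  apply Finite.of_injective
    (fun g : {g : ℕ → ℕ // (∀ i j, i ≤ j → g j ≤ g i) ∧ ∀ a, g a ≤ lam a} =>
      fun i : Fin n =>
      (⟨g.1 i, Nat.lt_succ_of_le (le_trans (g.2.2 i) (hlam 0 i (Nat.zero_le _)))⟩ : Fin (lam 0 + 1)))
  intro g g' he
  apply Subtype.ext
  funext a
  by_cases ha : a < n
  · exact congrArg Fin.val (congrFun he ⟨a, ha⟩)
  · have h1 : g.1 a ≤ 0 := hlam0 a (by omega) ▸ g.2.2 a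
    have h2 : g'.1 a ≤ 0 := hlam0 a (by omega) ▸ g'.2.2 a
    omega

lemma finite_ssyt {n k : ℕ} {lam mu : ℕ → ℕ} (hlamn : ∀ a, lam a ≤ n)
    (hlam0 : ∀ a, n ≤ a → lam a = 0) (hmul : ∀ a, mu a ≤ lam a) :
    Finite {S : ℕ → ℕ → ℕ // IsSSYT k mu S} := by
  apply finite_tab (n := n) (m := k)
  · intro S hS a b hab
    apply hS.2.1
    rcases hab with h | h
    · have := hmul a; have := hlam0 a h; omega
    · have := hmul a; have := hlamn a; omega
  · intro S hS a b
    by_cases h : b < mu a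
    · exact (hS.1 a b h).2
    · rw [hS.2.1 a b (by omega)]; exact Nat.zero_le _

lemma finite_skew {n ℓ : ℕ} {lamc muc : ℕ → ℕ} (hlamn : ∀ b, lamc b ≤ n)
    (hlamc0 : ∀ b, n ≤ b → lamc b = 0) :
    Finite {Y : ℕ → ℕ → ℕ // IsSkewSSYT ℓ lamc muc Y} := by
  apply finite_tab (n := n) (m := ℓ)
  · intro Y hY a b hab
    apply hY.2.1
    rcases hab with h | h
    · have := hlamc0 a h; omega
    · have := hlamn a; omega
  · intro Y hY a b
    by_cases h : muc a ≤ b ∧ b < lamc a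
    · exact (hY.1 a b h.1 h.2).2
    · rw [hY.2.1 a b h]; exact Nat.zero_le _

lemma finite_super {n k ℓ : ℕ} {lam : ℕ → ℕ} (hlamn : ∀ a, lam a ≤ n)
    (hlam0 : ∀ a, n ≤ a → lam a = 0) :
    Finite {T : ℕ → ℕ → ℕ // SuperSSYT k ℓ lam T} := by
  apply finite_tab (n := n) (m := k + ℓ)
  · intro T hT a b hab
    apply hT.2.1
    rcases hab with h | h
    · have := hlam0 a h; omega
    · have := hlamn a; omega
  · intro T hT a b
    by_cases h : b < lam a
    · exact (hT.1 a b h).2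
    · rw [hT.2.1 a b (by omega)]; exact Nat.zero_le _

lemma conj_zero {n : ℕ} {lam : ℕ → ℕ} (hlamn : ∀ a, lam a ≤ n) (b : ℕ) (hb : n ≤ b) :
    conj n lam b = 0 := by
  rw [conj, Finset.card_eq_zero, Finset.filter_eq_empty_iff]
  intro a _
  have := hlamn a
  omega

end finiteness
section term
open Finset

lemma term_eq {R : Type*} [CommRing R] (x y : ℕ → R) {n k ℓ : ℕ} {lam : ℕ → ℕ}
    {T : ℕ → ℕ → ℕ}
    (hlam : ∀ i j, i ≤ j → lam j ≤ lam i) (hlam0 : ∀ a, n ≤ a → lam a = 0)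
    (hlamn : ∀ a, lam a ≤ n) (hsum : ∑ a ∈ Finset.range n, lam a = n)
    (hT : SuperSSYT k ℓ lam T) :
    (-1 : R) ^ (n - ∑ a ∈ Finset.range n, muOf k lam T a)
      * (∏ a ∈ Finset.range n, ∏ b ∈ Finset.range (muOf k lam T a), x (sOf k lam T a b))
      * (∏ b ∈ Finset.range n, ∏ a ∈ Finset.range (conj n lam b),
          (if a < conj n (muOf k lam T) b then (1:R) else y (yOf n k lam T b a)))
    = ∏ a ∈ Finset.range n, ∏ b ∈ Finset.range (lam a),
        (if T a b ≤ k then x (T a b) else -(y (T a b - k))) := by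
  have hclam : ∀ a b, a < conj n lam b ↔ b < lam a :=
    fun a b => lt_conj_iff n lam hlam hlam0 a b
  have hcmu : ∀ a b, a < conj n (muOf k lam T) b ↔ b < muOf k lam T a :=
    fun a b => lt_conj_iff n _ (muOf_anti hlam hT) (muOf_zero hlam0) a b
  have rowsplit : ∀ a, (∏ b ∈ Finset.range (lam a),
        (if T a b ≤ k then x (T a b) else -(y (T a b - k))))
      = (∏ b ∈ Finset.range (muOf k lam T a), x (sOf k lam T a b))
        * ((-1 : R) ^ (lam a - muOf k lam T a)
            * ∏ b ∈ Finset.Ico (muOf k lam T a) (lam a), y (T a b - k)) := by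
    intro a
    rw [Finset.range_eq_Ico,
      ← Finset.prod_Ico_consecutive _ (Nat.zero_le (muOf k lam T a)) (muOf_le_lam a)]
    congr 1
    · rw [← Finset.range_eq_Ico]
      apply Finset.prod_congr rfl
      intro b hb
      rw [Finset.mem_range] at hb
      have hc := (lt_muOf_iff hT a b).1 hb
      rw [if_pos hc.2]
      simp only [sOf, if_pos hb]
    · have step : ∀ b ∈ Finset.Ico (muOf k lam T a) (lam a),
          (if T a b ≤ k then x (T a b) else -(y (T a b - k))) = (-1 : R) * y (T a b - k) := by
        intro b hb
        rw [Finset.mem_Ico] at hb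
        have hbig : ¬ T a b ≤ k := by
          have := lt_muOf_iff hT a b; omega
        rw [if_neg hbig, ← neg_one_mul]
      rw [Finset.prod_congr rfl step, Finset.prod_mul_distrib, Finset.prod_const, Nat.card_Ico]
  have hexp : ∑ a ∈ Finset.range n, (lam a - muOf k lam T a)
      = n - ∑ a ∈ Finset.range n, muOf k lam T a := by
    rw [Finset.sum_tsub_distrib _ (fun a _ => muOf_le_lam a), hsum]
  have skewsplit : (∏ b ∈ Finset.range n, ∏ a ∈ Finset.range (conj n lam b),
        (if a < conj n (muOf k lam T) b then (1:R) else y (yOf n k lam T b a)))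
      = ∏ b ∈ Finset.range n, ∏ a ∈ Finset.Ico (conj n (muOf k lam T) b) (conj n lam b),
          y (T a b - k) := by
    apply Finset.prod_congr rfl
    intro b _
    rw [Finset.range_eq_Ico,
      ← Finset.prod_Ico_consecutive _ (Nat.zero_le _) (conj_mono n (fun a => muOf_le_lam a) b)]
    have h1 : (∏ a ∈ Finset.Ico 0 (conj n (muOf k lam T) b),
        (if a < conj n (muOf k lam T) b then (1:R) else y (yOf n k lam T b a))) = 1 := by
      apply Finset.prod_eq_one
      intro a ha
      rw [Finset.mem_Ico] at ha
      rw [if_pos ha.2]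
    rw [h1, one_mul]
    apply Finset.prod_congr rfl
    intro a ha
    rw [Finset.mem_Ico] at ha
    have hcond : conj n (muOf k lam T) b ≤ a ∧ a < conj n lam b := ⟨ha.1, ha.2⟩
    rw [if_neg (by omega)]
    simp only [yOf, if_pos hcond]
  have reindex : (∏ b ∈ Finset.range n, ∏ a ∈ Finset.Ico (conj n (muOf k lam T) b)
        (conj n lam b), y (T a b - k))
      = ∏ a ∈ Finset.range n, ∏ b ∈ Finset.Ico (muOf k lam T a) (lam a), y (T a b - k) := by
    rw [Finset.prod_sigma', Finset.prod_sigma']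
    refine Finset.prod_nbij' (fun p => ⟨p.2, p.1⟩) (fun p => ⟨p.2, p.1⟩) ?_ ?_ ?_ ?_ ?_
    · intro p hp
      simp only [Finset.mem_sigma, Finset.mem_range, Finset.mem_Ico] at hp ⊢
      obtain ⟨h1, h2, h3⟩ := hp
      refine ⟨lt_of_lt_of_le h3 (conj_le n lam p.1), ?_, (hclam p.2 p.1).1 h3⟩
      have := hcmu p.2 p.1; omega
    · intro p hp
      simp only [Finset.mem_sigma, Finset.mem_range, Finset.mem_Ico] at hp ⊢
      obtain ⟨h1, h2, h3⟩ := hp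
      have hn : p.2 < n := by
        have := hlamn p.1; omega
      refine ⟨hn, ?_, (hclam p.1 p.2).2 h3⟩
      have := hcmu p.1 p.2; omega
    · intro p _; rfl
    · intro p _; rfl
    · intro p _; rfl
  rw [skewsplit, reindex]
  calc (-1 : R) ^ (n - ∑ a ∈ Finset.range n, muOf k lam T a)
      * (∏ a ∈ Finset.range n, ∏ b ∈ Finset.range (muOf k lam T a), x (sOf k lam T a b))
      * (∏ a ∈ Finset.range n, ∏ b ∈ Finset.Ico (muOf k lam T a) (lam a), y (T a b - k))
      = ∏ a ∈ Finset.range n,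
          ((∏ b ∈ Finset.range (muOf k lam T a), x (sOf k lam T a b))
            * ((-1 : R) ^ (lam a - muOf k lam T a)
              * ∏ b ∈ Finset.Ico (muOf k lam T a) (lam a), y (T a b - k))) := by
        rw [Finset.prod_mul_distrib, Finset.prod_mul_distrib, Finset.prod_pow_eq_pow_sum, hexp]
        ring
    _ = _ := (Finset.prod_congr rfl (fun a _ => (rowsplit a).symm))
end term

lemma pack_eq {n k ℓ : ℕ} {lam : ℕ → ℕ}
    (p q : Σ mu : {g : ℕ → ℕ // (∀ i j, i ≤ j → g j ≤ g i) ∧ ∀ a, g a ≤ lam a},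
      {S : ℕ → ℕ → ℕ // IsSSYT k mu.1 S}
        × {Y : ℕ → ℕ → ℕ // IsSkewSSYT ℓ (conj n lam) (conj n mu.1) Y})
    (h1 : p.1.1 = q.1.1) (h2 : p.2.1.1 = q.2.1.1) (h3 : p.2.2.1 = q.2.2.1) : p = q := by
  obtain ⟨⟨mu, hmu⟩, ⟨S, hS⟩, ⟨Y, hY⟩⟩ := p
  obtain ⟨⟨mu', hmu'⟩, ⟨S', hS'⟩, ⟨Y', hY'⟩⟩ := q
  dsimp at h1 h2 h3
  subst h1; subst h2; subst h3
  rfl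

set_option maxHeartbeats 1000000 in
/-- The supersymmetric Schur function
`S_λ(x/y) = ∑_{μ ⊆ λ} (-1)^{|λ|-|μ|} S_μ(x) S_{λ'/μ'}(y)` equals the signed
generating function of `(k,ℓ)`-semistandard tableaux of shape `λ`, each cell
contributing its variable with a sign `(-1)` for each odd entry. -/
theorem stmt_18 {R : Type*} [CommRing R] (n k ℓ : ℕ) (lam : ℕ → ℕ)
    (hpart : IsPartitionOf n lam) (x y : ℕ → R) :
    (∑ᶠ mu : {g : ℕ → ℕ // (∀ i j, i ≤ j → g j ≤ g i) ∧ ∀ a, g a ≤ lam a},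
      (-1 : R) ^ (n - ∑ a ∈ Finset.range n, mu.1 a)
      * (∑ᶠ S : {S : ℕ → ℕ → ℕ // IsSSYT k mu.1 S},
          ∏ a ∈ Finset.range n, ∏ b ∈ Finset.range (mu.1 a), x (S.1 a b))
      * (∑ᶠ Y : {Y : ℕ → ℕ → ℕ // IsSkewSSYT ℓ (conj n lam) (conj n mu.1) Y},
          ∏ b ∈ Finset.range n, ∏ a ∈ Finset.range (conj n lam b),
            (if a < conj n mu.1 b then 1 else y (Y.1 b a))))
    = ∑ᶠ T : {T : ℕ → ℕ → ℕ // SuperSSYT k ℓ lam T},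
        ∏ a ∈ Finset.range n, ∏ b ∈ Finset.range (lam a),
          (if T.1 a b ≤ k then x (T.1 a b) else -(y (T.1 a b - k))) := by
  classical
  obtain ⟨hlam, hlam0, hsum⟩ := hpart
  have hlamn : ∀ a, lam a ≤ n := by
    intro a
    by_cases ha : a < n
    · calc lam a ≤ ∑ i ∈ Finset.range n, lam i :=
            Finset.single_le_sum (fun i _ => Nat.zero_le _) (Finset.mem_range.2 ha)
        _ = n := hsum
    · rw [hlam0 a (by omega)]
      exact Nat.zero_le _
  letI instA : Fintype {g : ℕ → ℕ // (∀ i j, i ≤ j → g j ≤ g i) ∧ ∀ a, g a ≤ lam a} :=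
    @Fintype.ofFinite _ (finite_mu hlam hlam0)
  letI instB : ∀ mu : {g : ℕ → ℕ // (∀ i j, i ≤ j → g j ≤ g i) ∧ ∀ a, g a ≤ lam a},
      Fintype {S : ℕ → ℕ → ℕ // IsSSYT k mu.1 S} :=
    fun mu => @Fintype.ofFinite _ (finite_ssyt hlamn hlam0 mu.2.2)
  letI instC : ∀ mu : {g : ℕ → ℕ // (∀ i j, i ≤ j → g j ≤ g i) ∧ ∀ a, g a ≤ lam a},
      Fintype {Y : ℕ → ℕ → ℕ // IsSkewSSYT ℓ (conj n lam) (conj n mu.1) Y} :=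
    fun _ => @Fintype.ofFinite _ (finite_skew (fun b => conj_le n lam b) (conj_zero hlamn))
  letI instD : Fintype {T : ℕ → ℕ → ℕ // SuperSSYT k ℓ lam T} :=
    @Fintype.ofFinite _ (finite_super hlamn hlam0)
  let e : {T : ℕ → ℕ → ℕ // SuperSSYT k ℓ lam T} →
      (Σ mu : {g : ℕ → ℕ // (∀ i j, i ≤ j → g j ≤ g i) ∧ ∀ a, g a ≤ lam a},
        {S : ℕ → ℕ → ℕ // IsSSYT k mu.1 S}
          × {Y : ℕ → ℕ → ℕ // IsSkewSSYT ℓ (conj n lam) (conj n mu.1) Y}) :=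
    fun T => ⟨⟨muOf k lam T.1, muOf_anti hlam T.2, fun a => muOf_le_lam a⟩,
      ⟨sOf k lam T.1, sOf_SSYT hlam T.2⟩, ⟨yOf n k lam T.1, yOf_skew hlam hlam0 T.2⟩⟩
  have hbij : Function.Bijective e := by
    constructor
    · intro T T' h
      have h1 : muOf k lam T.1 = muOf k lam T'.1 := congrArg (fun p => p.1.1) h
      have h2 : sOf k lam T.1 = sOf k lam T'.1 := congrArg (fun p => p.2.1.1) h
      have h3 : yOf n k lam T.1 = yOf n k lam T'.1 := congrArg (fun p => p.2.2.1) h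
      apply Subtype.ext
      rw [← tOf_round hlam hlam0 T.2, ← tOf_round hlam hlam0 T'.2, h1, h2, h3]
    · rintro ⟨⟨mu, hmu1, hmu2⟩, ⟨S, hS⟩, ⟨Y, hY⟩⟩
      refine ⟨⟨tOf k lam mu S Y, tOf_super hlam hlam0 hmu1 hmu2 hS hY⟩, ?_⟩
      apply pack_eq
      · exact muOf_tOf hlam hlam0 hmu1 hmu2 hS hY
      · exact sOf_tOf hlam hlam0 hmu1 hmu2 hS hY
      · exact yOf_tOf hlam hlam0 hmu1 hmu2 hS hY
  calc (∑ᶠ mu : {g : ℕ → ℕ // (∀ i j, i ≤ j → g j ≤ g i) ∧ ∀ a, g a ≤ lam a},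
      (-1 : R) ^ (n - ∑ a ∈ Finset.range n, mu.1 a)
      * (∑ᶠ S : {S : ℕ → ℕ → ℕ // IsSSYT k mu.1 S},
          ∏ a ∈ Finset.range n, ∏ b ∈ Finset.range (mu.1 a), x (S.1 a b))
      * (∑ᶠ Y : {Y : ℕ → ℕ → ℕ // IsSkewSSYT ℓ (conj n lam) (conj n mu.1) Y},
          ∏ b ∈ Finset.range n, ∏ a ∈ Finset.range (conj n lam b),
            (if a < conj n mu.1 b then 1 else y (Y.1 b a))))
      = ∑ mu : {g : ℕ → ℕ // (∀ i j, i ≤ j → g j ≤ g i) ∧ ∀ a, g a ≤ lam a},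
        (-1 : R) ^ (n - ∑ a ∈ Finset.range n, mu.1 a)
        * (∑ S : {S : ℕ → ℕ → ℕ // IsSSYT k mu.1 S},
            ∏ a ∈ Finset.range n, ∏ b ∈ Finset.range (mu.1 a), x (S.1 a b))
        * (∑ Y : {Y : ℕ → ℕ → ℕ // IsSkewSSYT ℓ (conj n lam) (conj n mu.1) Y},
            ∏ b ∈ Finset.range n, ∏ a ∈ Finset.range (conj n lam b),
              (if a < conj n mu.1 b then 1 else y (Y.1 b a))) := by
        rw [finsum_eq_sum_of_fintype]
        exact Finset.sum_congr rfl fun mu _ => by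
          rw [finsum_eq_sum_of_fintype, finsum_eq_sum_of_fintype]
    _ = ∑ mu : {g : ℕ → ℕ // (∀ i j, i ≤ j → g j ≤ g i) ∧ ∀ a, g a ≤ lam a},
        ∑ S : {S : ℕ → ℕ → ℕ // IsSSYT k mu.1 S},
        ∑ Y : {Y : ℕ → ℕ → ℕ // IsSkewSSYT ℓ (conj n lam) (conj n mu.1) Y},
        ((-1 : R) ^ (n - ∑ a ∈ Finset.range n, mu.1 a)
          * (∏ a ∈ Finset.range n, ∏ b ∈ Finset.range (mu.1 a), x (S.1 a b))
          * (∏ b ∈ Finset.range n, ∏ a ∈ Finset.range (conj n lam b),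
              (if a < conj n mu.1 b then 1 else y (Y.1 b a)))) := by
        refine Finset.sum_congr rfl fun mu _ => ?_
        rw [mul_assoc, Finset.sum_mul_sum, Finset.mul_sum]
        refine Finset.sum_congr rfl fun S _ => ?_
        rw [Finset.mul_sum]
        refine Finset.sum_congr rfl fun Y _ => ?_
        ring
    _ = ∑ mu : {g : ℕ → ℕ // (∀ i j, i ≤ j → g j ≤ g i) ∧ ∀ a, g a ≤ lam a},
        ∑ q : ({S : ℕ → ℕ → ℕ // IsSSYT k mu.1 S}
            × {Y : ℕ → ℕ → ℕ // IsSkewSSYT ℓ (conj n lam) (conj n mu.1) Y}),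
        ((-1 : R) ^ (n - ∑ a ∈ Finset.range n, mu.1 a)
          * (∏ a ∈ Finset.range n, ∏ b ∈ Finset.range (mu.1 a), x (q.1.1 a b))
          * (∏ b ∈ Finset.range n, ∏ a ∈ Finset.range (conj n lam b),
              (if a < conj n mu.1 b then 1 else y (q.2.1 b a)))) :=
        Finset.sum_congr rfl fun mu _ =>
          (Fintype.sum_prod_type'
            (fun (S : {S : ℕ → ℕ → ℕ // IsSSYT k mu.1 S})
                (Y : {Y : ℕ → ℕ → ℕ // IsSkewSSYT ℓ (conj n lam) (conj n mu.1) Y}) =>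
              ((-1 : R) ^ (n - ∑ a ∈ Finset.range n, mu.1 a)
                * (∏ a ∈ Finset.range n, ∏ b ∈ Finset.range (mu.1 a), x (S.1 a b))
                * (∏ b ∈ Finset.range n, ∏ a ∈ Finset.range (conj n lam b),
                    (if a < conj n mu.1 b then 1 else y (Y.1 b a)))))).symm
    _ = ∑ p : (Σ mu : {g : ℕ → ℕ // (∀ i j, i ≤ j → g j ≤ g i) ∧ ∀ a, g a ≤ lam a},
          {S : ℕ → ℕ → ℕ // IsSSYT k mu.1 S}
            × {Y : ℕ → ℕ → ℕ // IsSkewSSYT ℓ (conj n lam) (conj n mu.1) Y}),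
        ((-1 : R) ^ (n - ∑ a ∈ Finset.range n, p.1.1 a)
          * (∏ a ∈ Finset.range n, ∏ b ∈ Finset.range (p.1.1 a), x (p.2.1.1 a b))
          * (∏ b ∈ Finset.range n, ∏ a ∈ Finset.range (conj n lam b),
              (if a < conj n p.1.1 b then 1 else y (p.2.2.1 b a)))) := by
        rw [← Finset.univ_sigma_univ, Finset.sum_sigma]
    _ = ∑ T : {T : ℕ → ℕ → ℕ // SuperSSYT k ℓ lam T},
        ∏ a ∈ Finset.range n, ∏ b ∈ Finset.range (lam a),
          (if T.1 a b ≤ k then x (T.1 a b) else -(y (T.1 a b - k))) :=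
        (Fintype.sum_bijective e hbij _ _
          (fun T => (term_eq x y hlam hlam0 hlamn hsum T.2).symm)).symm
    _ = ∑ᶠ T : {T : ℕ → ℕ → ℕ // SuperSSYT k ℓ lam T},
        ∏ a ∈ Finset.range n, ∏ b ∈ Finset.range (lam a),
          (if T.1 a b ≤ k then x (T.1 a b) else -(y (T.1 a b - k))) :=
        (finsum_eq_sum_of_fintype _).symm
end
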